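/- arXiv:1706.09029 — 5 statements merged into one kernel-verified Lean document; each statement's English description precedes it below -/
import Mathlib

section
/- Let G be a graph whose edge set decomposes into a 2-factor consisting of a minimum number of vertex-disjoint cycles. If C and D are two distinct cycles of this 2-factor, x ∈ V(C) is adjacent (in G) to u ∈ V(D), then x⁺ is not adjacent to u⁺ or u⁻, and x⁻ is not adjacent to u⁺ or u⁻, where ⁺ and ⁻ denote successor and predecessor along the (oriented) cycles. -/
open SimpleGraph

variable {V : Type*}

/-- `G` has no induced `2K₂`. -/
def TwoK2Free (G : SimpleGraph V) : Prop :=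
  ¬ ∃ a b c d : V, a ≠ b ∧ a ≠ c ∧ a ≠ d ∧ b ≠ c ∧ b ≠ d ∧ c ≠ d ∧
      G.Adj a b ∧ G.Adj c d ∧ ¬G.Adj a c ∧ ¬G.Adj a d ∧ ¬G.Adj b c ∧ ¬G.Adj b d

/-- An independent set of vertices. -/
def IndepSet (G : SimpleGraph V) (s : Set V) : Prop :=
  s.Pairwise fun a b => ¬ G.Adj a b

/-- Number of connected components of `G - S`. -/
noncomputable def compCount [Fintype V] (G : SimpleGraph V) (S : Set V) : ℕ :=
  Nat.card ((G.induce Sᶜ).ConnectedComponent)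

/-- `G` is `t`-tough. -/
def Tough [Fintype V] (t : ℝ) (G : SimpleGraph V) : Prop :=
  ∀ S : Set V, 2 ≤ compCount G S → t * (compCount G S : ℝ) ≤ (S.ncard : ℝ)

/-- A family of `k` pairwise vertex-disjoint cycles in `G` covering all vertices,
i.e. the cycles of a 2-factor of `G`. -/
structure CycleFamily (G : SimpleGraph V) (k : ℕ) (n : Fin k → ℕ)
    (c : ∀ i : Fin k, ZMod (n i) → V) : Prop where
  three_le : ∀ i, 3 ≤ n i
  inj : ∀ i, Function.Injective (c i)
  adj : ∀ i j, G.Adj (c i j) (c i (j + 1))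
  disj : ∀ i i' j j', c i j = c i' j' → i = i'
  spanning : ∀ v, ∃ i j, c i j = v

/-- A vertex `v` lying on cycle `i` of the family is of A-type if it is adjacent to two
consecutive vertices of some other cycle of the family. -/
def AType {k : ℕ} {n : Fin k → ℕ} (G : SimpleGraph V)
    (c : ∀ i : Fin k, ZMod (n i) → V) (i : Fin k) (v : V) : Prop :=
  ∃ i' : Fin k, i' ≠ i ∧ ∃ j : ZMod (n i'), G.Adj v (c i' j) ∧ G.Adj v (c i' (j + 1))


/-! If `x ~ u` and `x⁺ ~ u⁺` for `x` on `C` and `u` on `D`, then replacing the edges `x x⁺` and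
`u u⁺` by `x u` and `x⁺ u⁺` joins `C` and `D` into a single cycle, so the 2-factor was not minimal.
Reversing the orientation of `D` turns `x⁺ ~ u⁻` into this case, and `x⁻ ~ u⁺`, `x⁻ ~ u⁻` are the
same two cases read from `x⁻` and `u⁻` or `u⁺`. -/

namespace ZMod

lemma natCast_injOn_Iio (N : ℕ) : Set.InjOn (Nat.cast : ℕ → ZMod N) (Set.Iio N) := by
  intro s hs s' hs' h
  rw [← val_natCast_of_lt hs, ← val_natCast_of_lt hs', h]

lemma natCast_pred_self {N : ℕ} (hN : 0 < N) : ((N - 1 : ℕ) : ZMod N) = -1 := by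
  rw [Nat.cast_pred hN, natCast_self, zero_sub]

lemma val_add_one_eq_ite {N : ℕ} (hN : 1 < N) (t : ZMod N) :
    (t + 1).val = if t.val + 1 < N then t.val + 1 else 0 := by
  have : Fact (1 < N) := ⟨hN⟩
  have := val_lt t
  rw [val_add, val_one]
  split_ifs with h
  · exact Nat.mod_eq_of_lt h
  · rw [show t.val + 1 = N by omega, Nat.mod_self]

end ZMod

namespace CycleFamily

variable {G : SimpleGraph V}

theorem of_seq {k : ℕ} {N : Fin k → ℕ} (g : Fin k → ℕ → V)
    (three_le : ∀ j, 3 ≤ N j)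
    (injOn : ∀ j, Set.InjOn (g j) (Set.Iio (N j)))
    (adj : ∀ j s, s + 1 < N j → G.Adj (g j s) (g j (s + 1)))
    (adj_last : ∀ j, G.Adj (g j (N j - 1)) (g j 0))
    (disj : ∀ j j' s s', s < N j → s' < N j' → g j s = g j' s' → j = j')
    (spanning : ∀ v, ∃ j, ∃ s < N j, g j s = v) :
    CycleFamily G k N (fun j t => g j t.val) := by
  have : ∀ j, NeZero (N j) := fun j => ⟨by have := three_le j; omega⟩
  refine ⟨three_le,
    fun j t t' h => ZMod.val_injective _ (injOn j (ZMod.val_lt t) (ZMod.val_lt t') h),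
    fun j t => ?_, fun j j' t t' => disj j j' _ _ (ZMod.val_lt t) (ZMod.val_lt t'), fun v => ?_⟩
  · rw [ZMod.val_add_one_eq_ite (by have := three_le j; omega)]
    split_ifs with h
    · exact adj j _ h
    · rw [show t.val = N j - 1 by have := ZMod.val_lt t; omega]
      exact adj_last j
  · obtain ⟨j, s, hs, rfl⟩ := spanning v
    exact ⟨j, s, by rw [ZMod.val_natCast_of_lt hs]⟩

variable {k : ℕ} {n : Fin k → ℕ} {c : ∀ i : Fin k, ZMod (n i) → V}

lemma adj_sub_one (hF : CycleFamily G k n c) (p : Fin k) (t : ZMod (n p)) :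
    G.Adj (c p t) (c p (t - 1)) := by
  simpa using (hF.adj p (t - 1)).symm

lemma reverse (hF : CycleFamily G k n c) (i₀ : Fin k) :
    CycleFamily G k n (fun p j => c p (if p = i₀ then -j else j)) where
  three_le := hF.three_le
  inj p t t' h := by
    by_cases hp : p = i₀
    · simp only [if_pos hp] at h
      exact neg_injective (hF.inj p h)
    · simpa only [if_neg hp] using hF.inj p h
  adj p j := by
    by_cases hp : p = i₀
    · simpa only [if_pos hp, neg_add'] using hF.adj_sub_one p (-j)
    · simpa only [if_neg hp] using hF.adj p j
  disj p p' j j' h := hF.disj _ _ _ _ h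
  spanning v := by
    obtain ⟨p, j, rfl⟩ := hF.spanning v
    refine ⟨p, if p = i₀ then -j else j, ?_⟩
    split_ifs <;> simp

section Merge

variable {i i' : Fin k} {a : ZMod (n i)} {b : ZMod (n i')}

variable (c i i' a b) in
/-- Trading the edges `(a, a + 1)` of cycle `i` and `(b, b + 1)` of cycle `i'` for `(a, b)` and
`(a + 1, b + 1)` joins the two cycles into one: forward through cycle `i` from `a + 1` to `a`, then
backward through cycle `i'` from `b` to `b + 1`. -/
def mergedCycle (s : ℕ) : V :=
  if s < n i then c i (a + 1 + s) else c i' (b - (s - n i : ℕ))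

lemma injOn_mergedCycle (hF : CycleFamily G k n c) (hii : i ≠ i') :
    Set.InjOn (mergedCycle c i i' a b) (Set.Iio (n i + n i')) := by
  intro s hs s' hs' h
  simp only [Set.mem_Iio, mergedCycle] at hs hs' h
  split_ifs at h with h₁ h₂ h₂
  · exact ZMod.natCast_injOn_Iio _ h₁ h₂ (add_left_cancel (hF.inj i h))
  · exact absurd (hF.disj _ _ _ _ h) hii
  · exact absurd (hF.disj _ _ _ _ h).symm hii
  · have := ZMod.natCast_injOn_Iio _ (show s - n i < n i' by omega) (show s' - n i < n i' by omega)
      (sub_right_inj.mp (hF.inj i' h))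
    omega

lemma adj_mergedCycle (hF : CycleFamily G k n c) (hab : G.Adj (c i a) (c i' b)) (s : ℕ) :
    G.Adj (mergedCycle c i i' a b s) (mergedCycle c i i' a b (s + 1)) := by
  unfold mergedCycle
  rcases lt_trichotomy (s + 1) (n i) with h | h | h
  · rw [if_pos (by omega), if_pos h, Nat.cast_succ, ← add_assoc]
    exact hF.adj i _
  · rw [if_pos (by omega), if_neg (by omega), h, Nat.sub_self, Nat.cast_zero, sub_zero,
      show s = n i - 1 by omega, ZMod.natCast_pred_self (by omega), add_neg_cancel_right]
    exact hab
  · rw [if_neg (by omega), if_neg (by omega), show s + 1 - n i = s - n i + 1 by omega,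
      Nat.cast_succ, ← sub_sub]
    exact hF.adj_sub_one i' _

lemma adj_mergedCycle_last (hF : CycleFamily G k n c) (hab₁ : G.Adj (c i (a + 1)) (c i' (b + 1))) :
    G.Adj (mergedCycle c i i' a b (n i + n i' - 1)) (mergedCycle c i i' a b 0) := by
  have := hF.three_le i; have := hF.three_le i'
  unfold mergedCycle
  rw [if_neg (by omega), if_pos (by omega), show n i + n i' - 1 - n i = n i' - 1 by omega,
    ZMod.natCast_pred_self (by omega), Nat.cast_zero, add_zero, sub_neg_eq_add]
  exact hab₁.symm

lemma mem_of_mergedCycle_eq (hF : CycleFamily G k n c) {s : ℕ} {p : Fin k} {t : ZMod (n p)}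
    (h : mergedCycle c i i' a b s = c p t) : p = i ∨ p = i' := by
  unfold mergedCycle at h
  split_ifs at h
  exacts [.inl (hF.disj _ _ _ _ h).symm, .inr (hF.disj _ _ _ _ h).symm]

lemma exists_mergedCycle_eq (hF : CycleFamily G k n c) {p : Fin k} (hp : p = i ∨ p = i')
    (t : ZMod (n p)) : ∃ s < n i + n i', mergedCycle c i i' a b s = c p t := by
  have := hF.three_le i; have := hF.three_le i'
  have : NeZero (n i) := ⟨by omega⟩
  have : NeZero (n i') := ⟨by omega⟩
  unfold mergedCycle
  rcases hp with rfl | rfl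
  · have := ZMod.val_lt (t - (a + 1))
    exact ⟨(t - (a + 1)).val, by omega, by simp [this]⟩
  · have := ZMod.val_lt (b - t)
    exact ⟨n i + (b - t).val, by omega, by simp⟩

end Merge

section MergeFamily

variable {m : ℕ} {n : Fin (m + 1) → ℕ} {c : ∀ i : Fin (m + 1), ZMod (n i) → V} {i i' : Fin (m + 1)}
  {a : ZMod (n i)} {b : ZMod (n i')}

/-! In the merged family, cycle `i'` is dropped, cycle `i` is replaced by the merged cycle, and
the remaining cycles are re-indexed along `Fin.succAbove i'`. -/

variable (n i i') in
def mergeLength (j : Fin m) : ℕ :=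
  if i'.succAbove j = i then n i + n i' else n (i'.succAbove j)

variable (c i i' a b) in
def mergeSeq (j : Fin m) : ℕ → V :=
  if i'.succAbove j = i then mergedCycle c i i' a b else fun s => c (i'.succAbove j) s

theorem merge (hF : CycleFamily G (m + 1) n c) (hii : i ≠ i')
    (hab : G.Adj (c i a) (c i' b)) (hab₁ : G.Adj (c i (a + 1)) (c i' (b + 1))) :
    CycleFamily G m (mergeLength n i i') (fun j t => mergeSeq c i i' a b j t.val) := by
  refine of_seq _ (fun j => ?_) (fun j => ?_) (fun j s _ => ?_) (fun j => ?_)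
    (fun j j' s s' hs hs' h => ?_) (fun v => ?_)
  · unfold mergeLength
    split_ifs
    · have := hF.three_le i; omega
    · exact hF.three_le _
  · unfold mergeLength mergeSeq
    split_ifs
    · exact hF.injOn_mergedCycle hii
    · exact (hF.inj _).comp_injOn (ZMod.natCast_injOn_Iio _)
  · unfold mergeSeq
    split_ifs
    · exact hF.adj_mergedCycle hab s
    · simpa using hF.adj _ s
  · unfold mergeLength mergeSeq
    split_ifs
    · exact hF.adj_mergedCycle_last hab₁
    · dsimp only
      rw [ZMod.natCast_pred_self (by have := hF.three_le (i'.succAbove j); omega)]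
      simpa using hF.adj _ (-1)
  · unfold mergeSeq at h
    split_ifs at h with hj hj' hj'
    · exact Fin.succAbove_right_injective (hj.trans hj'.symm)
    · exact ((hF.mem_of_mergedCycle_eq h).elim hj' (Fin.succAbove_ne _ _)).elim
    · exact ((hF.mem_of_mergedCycle_eq h.symm).elim hj (Fin.succAbove_ne _ _)).elim
    · exact Fin.succAbove_right_injective (hF.disj _ _ _ _ h)
  · obtain ⟨p, t, rfl⟩ := hF.spanning v
    by_cases hp : p = i ∨ p = i'
    · obtain ⟨j, hj⟩ := Fin.exists_succAbove_eq hii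
      obtain ⟨s, hs, hst⟩ := hF.exists_mergedCycle_eq (a := a) (b := b) hp t
      exact ⟨j, s, by simpa [mergeLength, hj], by simpa [mergeSeq, hj]⟩
    · obtain ⟨hpi, hpi'⟩ := not_or.mp hp
      obtain ⟨j, rfl⟩ := Fin.exists_succAbove_eq hpi'
      have : NeZero (n (i'.succAbove j)) := ⟨by have := hF.three_le (i'.succAbove j); omega⟩
      exact ⟨j, t.val, by simpa [mergeLength, hpi] using ZMod.val_lt t, by simp [mergeSeq, hpi]⟩

end MergeFamily

section Minimal

variable {k : ℕ} {n : Fin k → ℕ} {c : ∀ i : Fin k, ZMod (n i) → V} {iC iD : Fin k}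
  {x : ZMod (n iC)} {u : ZMod (n iD)}

theorem not_adj_add_one_add_one (hF : CycleFamily G k n c)
    (hmin : ∀ (k' : ℕ) (n' : Fin k' → ℕ) (c' : ∀ i : Fin k', ZMod (n' i) → V),
      CycleFamily G k' n' c' → k ≤ k')
    (hne : iC ≠ iD) (hxu : G.Adj (c iC x) (c iD u)) :
    ¬ G.Adj (c iC (x + 1)) (c iD (u + 1)) := by
  intro h
  obtain ⟨m, rfl⟩ : ∃ m, k = m + 1 := ⟨k - 1, by have := iC.pos; omega⟩
  have := hmin m _ _ (hF.merge hne hxu h)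
  omega

theorem not_adj_add_one_sub_one (hF : CycleFamily G k n c)
    (hmin : ∀ (k' : ℕ) (n' : Fin k' → ℕ) (c' : ∀ i : Fin k', ZMod (n' i) → V),
      CycleFamily G k' n' c' → k ≤ k')
    (hne : iC ≠ iD) (hxu : G.Adj (c iC x) (c iD u)) :
    ¬ G.Adj (c iC (x + 1)) (c iD (u - 1)) := by
  simpa [hne, sub_eq_add_neg, add_comm] using
    (hF.reverse iD).not_adj_add_one_add_one hmin hne (x := x) (u := -u) (by simpa [hne] using hxu)

end Minimal

end CycleFamily
theorem nonadjacency_min_two_factor (G : SimpleGraph V)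
    (k : ℕ) (n : Fin k → ℕ) (c : ∀ i : Fin k, ZMod (n i) → V)
    (hF : CycleFamily G k n c)
    (hmin : ∀ (k' : ℕ) (n' : Fin k' → ℕ) (c' : ∀ i : Fin k', ZMod (n' i) → V),
      CycleFamily G k' n' c' → k ≤ k')
    (iC iD : Fin k) (hne : iC ≠ iD) (x : ZMod (n iC)) (u : ZMod (n iD))
    (hxu : G.Adj (c iC x) (c iD u)) :
    ¬ G.Adj (c iC (x + 1)) (c iD (u + 1)) ∧ ¬ G.Adj (c iC (x + 1)) (c iD (u - 1)) ∧
      ¬ G.Adj (c iC (x - 1)) (c iD (u + 1)) ∧ ¬ G.Adj (c iC (x - 1)) (c iD (u - 1)) := by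
  refine ⟨hF.not_adj_add_one_add_one hmin hne hxu, hF.not_adj_add_one_sub_one hmin hne hxu,
    fun h => ?_, fun h => ?_⟩
  · exact hF.not_adj_add_one_sub_one hmin hne h (by simpa using hxu)
  · exact hF.not_adj_add_one_add_one hmin hne h (by simpa using hxu)
end

section
/- Let G be a 2K2-free graph with a minimum 2-factor F, C ∈ F, and xy ∈ E(C) a B-type edge (neither x nor y is adjacent to two consecutive vertices of any cycle in F other than C). Then for every cycle D ∈ F − {C}, the vertices of D alternate between non-neighbors of {x,y} and the rest; in particular, exactly half the vertices of D are adjacent to x or y. -/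
open SimpleGraph

variable {V : Type*}

/-!
Let `xy` be the B-type edge of `C` and `uu⁺` an edge of another cycle `D`. As `G` is
`2K₂`-free, some edge joins `{x, y}` to `{u, u⁺}`, so `u` or `u⁺` lies in `N(x) ∪ N(y)`.
Not both do: `x` or `y` seeing both contradicts B-type, while `xu⁺, yu` (or `xu, yu⁺`, after
reversing `D`) splice `C` and `D` into a single cycle, a 2-factor with fewer cycles.
So membership in `N(x) ∪ N(y)` alternates around `D`, and it holds for exactly half of `D`.
-/

open Set

lemma TwoK2Free.adj_or_adj_of_adj_of_adj {G : SimpleGraph V} (h : TwoK2Free G) {a b c d : V}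
    (hab : G.Adj a b) (hcd : G.Adj c d) (hac : a ≠ c) (had : a ≠ d) (hbc : b ≠ c)
    (hbd : b ≠ d) :
    (G.Adj a c ∨ G.Adj b c) ∨ (G.Adj a d ∨ G.Adj b d) := by
  by_contra! hcon
  exact h ⟨a, b, c, d, hab.ne, hac, had, hbc, hbd, hcd.ne, hab, hcd,
    hcon.1.1, hcon.2.1, hcon.1.2, hcon.2.2⟩

lemma two_mul_ncard_eq_of_mem_iff_add_notMem {α : Type*} [AddGroup α] [Finite α] {S : Set α}
    (g : α) (hS : ∀ a, a ∈ S ↔ a + g ∉ S) : 2 * S.ncard = Nat.card α := by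
  have hcompl : Sᶜ = (· + g) '' S := by
    ext a
    rw [image_add_right, mem_preimage, hS, neg_add_cancel_right]
    rfl
  have hcard : Sᶜ.ncard = S.ncard := by
    rw [hcompl, ncard_image_of_injective _ (add_left_injective g)]
  have := ncard_add_ncard_compl S
  omega

lemma ZMod.natCast_injOn_Iio_s6 {n : ℕ} : InjOn (Nat.cast : ℕ → ZMod n) (Iio n) :=
  fun k hk k' hk' h => by
    simpa [ZMod.val_cast_of_lt hk, ZMod.val_cast_of_lt hk'] using congrArg ZMod.val h

lemma ZMod.range_comp_val {N : ℕ} [NeZero N] (P : ℕ → V) :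
    range (fun z : ZMod N => P z.val) = P '' Iio N := by
  ext v
  constructor
  · rintro ⟨z, rfl⟩
    exact ⟨z.val, ZMod.val_lt z, rfl⟩
  · rintro ⟨k, hk, rfl⟩
    exact ⟨k, congrArg P (ZMod.val_cast_of_lt hk)⟩

def appendCycles {a b : ℕ} (p : ZMod a → V) (q : ZMod b → V) (k : ℕ) : V :=
  if k < a then p k else q (k - a : ℕ)

section appendCycles

variable {a b : ℕ} {p : ZMod a → V} {q : ZMod b → V}

lemma appendCycles_of_lt {k : ℕ} (hk : k < a) : appendCycles p q k = p k := if_pos hk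

lemma appendCycles_of_le {k : ℕ} (hk : a ≤ k) : appendCycles p q k = q (k - a : ℕ) :=
  if_neg hk.not_gt

lemma injOn_appendCycles (hp : Function.Injective p) (hq : Function.Injective q)
    (hpq : Disjoint (range p) (range q)) : InjOn (appendCycles p q) (Iio (a + b)) := by
  intro k hk k' hk' h
  simp only [mem_Iio] at hk hk'
  rcases lt_or_ge k a with h₁ | h₁ <;> rcases lt_or_ge k' a with h₂ | h₂
  · rw [appendCycles_of_lt h₁, appendCycles_of_lt h₂] at h
    exact ZMod.natCast_injOn_Iio_s6 h₁ h₂ (hp h)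
  · rw [appendCycles_of_lt h₁, appendCycles_of_le h₂] at h
    exact absurd h (hpq.ne_of_mem (mem_range_self _) (mem_range_self _))
  · rw [appendCycles_of_le h₁, appendCycles_of_lt h₂] at h
    exact absurd h.symm (hpq.ne_of_mem (mem_range_self _) (mem_range_self _))
  · rw [appendCycles_of_le h₁, appendCycles_of_le h₂] at h
    have := ZMod.natCast_injOn_Iio_s6 (n := b) (mem_Iio.2 (by omega)) (mem_Iio.2 (by omega)) (hq h)
    omega

lemma image_appendCycles [NeZero a] [NeZero b] :
    appendCycles p q '' Iio (a + b) = range p ∪ range q := by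
  apply Subset.antisymm
  · rintro _ ⟨k, -, rfl⟩
    rcases lt_or_ge k a with h | h
    · exact Or.inl (appendCycles_of_lt h ▸ mem_range_self _)
    · exact Or.inr (appendCycles_of_le h ▸ mem_range_self _)
  · rintro _ (⟨t, rfl⟩ | ⟨t, rfl⟩)
    · have := ZMod.val_lt t
      refine ⟨t.val, mem_Iio.2 (by omega), ?_⟩
      rw [appendCycles_of_lt this, ZMod.natCast_zmod_val]
    · have := ZMod.val_lt t
      refine ⟨a + t.val, mem_Iio.2 (by omega), ?_⟩
      rw [appendCycles_of_le (by omega), Nat.add_sub_cancel_left, ZMod.natCast_zmod_val]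

end appendCycles

structure IsCycleMap (G : SimpleGraph V) {N : ℕ} (p : ZMod N → V) : Prop where
  three_le : 3 ≤ N
  inj : Function.Injective p
  adj : ∀ z, G.Adj (p z) (p (z + 1))

namespace IsCycleMap

variable {G : SimpleGraph V} {N : ℕ} {p : ZMod N → V}

lemma comp_neg (hp : IsCycleMap G p) : IsCycleMap G (p ∘ Neg.neg) where
  three_le := hp.three_le
  inj := hp.inj.comp neg_injective
  adj z := by
    have h := (hp.adj (-z - 1)).symm
    rwa [sub_add_cancel, ← neg_add'] at h

lemma comp_add_left (hp : IsCycleMap G p) (s : ZMod N) : IsCycleMap G (p ∘ (s + ·)) where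
  three_le := hp.three_le
  inj := hp.inj.comp (add_right_injective s)
  adj z := by
    simpa only [Function.comp_apply, add_assoc] using hp.adj (s + z)

lemma of_nat {P : ℕ → V} (hN : 3 ≤ N) (hinj : InjOn P (Iio N))
    (hadj : ∀ k, k + 1 < N → G.Adj (P k) (P (k + 1))) (hwrap : G.Adj (P (N - 1)) (P 0)) :
    IsCycleMap G (fun z : ZMod N => P z.val) where
  three_le := hN
  inj a b h := by
    have : NeZero N := ⟨by omega⟩
    exact ZMod.val_injective N (hinj (ZMod.val_lt a) (ZMod.val_lt b) h)
  adj z := by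
    have : Fact (1 < N) := ⟨by omega⟩
    have hz := ZMod.val_lt z
    simp only [ZMod.val_add, ZMod.val_one]
    rcases (by omega : z.val + 1 < N ∨ z.val + 1 = N) with h | h
    · rw [Nat.mod_eq_of_lt h]
      exact hadj _ h
    · rw [h, Nat.mod_self, show z.val = N - 1 by omega]
      exact hwrap

lemma append {a b : ℕ} {p : ZMod a → V} {q : ZMod b → V} (hp : IsCycleMap G p)
    (hq : IsCycleMap G q) (hpq : Disjoint (range p) (range q))
    (hpq_adj : G.Adj (p (-1)) (q 0)) (hqp_adj : G.Adj (q (-1)) (p 0)) :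
    IsCycleMap G (fun z : ZMod (a + b) => appendCycles p q z.val) := by
  have ha := hp.three_le
  have hb := hq.three_le
  have hlast : ∀ {N : ℕ}, 1 ≤ N → ((N - 1 : ℕ) : ZMod N) = -1 := fun hN => by
    simp [Nat.cast_sub hN]
  refine of_nat (by omega) (injOn_appendCycles hp.inj hq.inj hpq) (fun k hk => ?_) ?_
  · rcases lt_trichotomy (k + 1) a with h | h | h
    · rw [appendCycles_of_lt (by omega), appendCycles_of_lt h, Nat.cast_succ]
      exact hp.adj _
    · rw [appendCycles_of_lt (by omega), appendCycles_of_le h.ge, h, Nat.sub_self,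
        show k = a - 1 by omega, hlast (by omega), Nat.cast_zero]
      exact hpq_adj
    · rw [appendCycles_of_le (by omega), appendCycles_of_le h.le,
        show k + 1 - a = k - a + 1 by omega, Nat.cast_succ]
      exact hq.adj _
  · rw [appendCycles_of_le (by omega), appendCycles_of_lt (by omega),
      show a + b - 1 - a = b - 1 by omega, hlast (by omega), Nat.cast_zero]
    exact hqp_adj

lemma exists_splice {a b : ℕ} {p : ZMod a → V} {q : ZMod b → V} (hp : IsCycleMap G p)
    (hq : IsCycleMap G q) (hpq : Disjoint (range p) (range q)) {x : ZMod a} {j : ZMod b}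
    (hx : G.Adj (p x) (q (j + 1))) (hy : G.Adj (p (x + 1)) (q j)) :
    ∃ d : ZMod (a + b) → V, IsCycleMap G d ∧ range d = range p ∪ range q := by
  have : NeZero a := ⟨by have := hp.three_le; omega⟩
  have : NeZero b := ⟨by have := hq.three_le; omega⟩
  -- run around `p` from `x + 1` to `x`, then around `q` from `j + 1` to `j`
  have hp' : range (p ∘ (x + 1 + ·)) = range p := (add_left_surjective _).range_comp p
  have hq' : range (q ∘ (j + 1 + ·)) = range q := (add_left_surjective _).range_comp q
  refine ⟨_, (hp.comp_add_left (x + 1)).append (hq.comp_add_left (j + 1)) (hp' ▸ hq' ▸ hpq)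
    (by simpa using hx) (by simpa using hy.symm), ?_⟩
  rw [ZMod.range_comp_val, image_appendCycles, hp', hq']

end IsCycleMap

namespace CycleFamily

section

variable {G : SimpleGraph V} {k : ℕ} {n : Fin k → ℕ} {c : ∀ i : Fin k, ZMod (n i) → V}

lemma isCycleMap (hF : CycleFamily G k n c) (i : Fin k) : IsCycleMap G (c i) :=
  ⟨hF.three_le i, hF.inj i, hF.adj i⟩

lemma disjoint_range (hF : CycleFamily G k n c) {i i' : Fin k} (h : i ≠ i') :
    Disjoint (range (c i)) (range (c i')) := by
  rw [disjoint_iff_forall_ne]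
  rintro _ ⟨z, rfl⟩ _ ⟨z', rfl⟩ hzz'
  exact h (hF.disj i i' z z' hzz')

lemma existsUnique_mem_range (hF : CycleFamily G k n c) (v : V) : ∃! i, v ∈ range (c i) := by
  obtain ⟨i, z, rfl⟩ := hF.spanning v
  exact ⟨i, mem_range_self z, fun i' ⟨z', hz'⟩ => hF.disj i' i z' z hz'⟩

lemma of_isCycleMap (hc : ∀ i, IsCycleMap G (c i)) (hv : ∀ v, ∃! i, v ∈ range (c i)) :
    CycleFamily G k n c where
  three_le i := (hc i).three_le
  inj i := (hc i).inj
  adj i := (hc i).adj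
  disj i i' z z' h := (hv (c i z)).unique (mem_range_self z) (h ▸ mem_range_self z')
  spanning v := by
    obtain ⟨i, ⟨z, hz⟩, -⟩ := hv v
    exact ⟨i, z, hz⟩

end

variable {G : SimpleGraph V} {m : ℕ} {n : Fin (m + 1) → ℕ} {c : ∀ i, ZMod (n i) → V}
  {iC iD : Fin (m + 1)} {x : ZMod (n iC)}

lemma exists_of_replace_pair (hF : CycleFamily G (m + 1) n c) (hne : iC ≠ iD) {N : ℕ}
    {d : ZMod N → V} (hd : IsCycleMap G d) (hrange : range d = range (c iC) ∪ range (c iD)) :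
    ∃ (n' : Fin m → ℕ) (c' : ∀ i, ZMod (n' i) → V), CycleFamily G m n' c' := by
  obtain ⟨iC', rfl⟩ := Fin.exists_succAbove_eq hne
  -- bundling length and map lets `if` pick a cycle without transport between `ZMod`s
  let f : Fin m → Σ N, (ZMod N → V) := fun i =>
    if i = iC' then ⟨N, d⟩ else ⟨n (iD.succAbove i), c (iD.succAbove i)⟩
  have hf : ∀ i, IsCycleMap G (f i).2 ∧ range (f i).2 =
      if i = iC' then range (c (iD.succAbove iC')) ∪ range (c iD)
      else range (c (iD.succAbove i)) := by
    intro i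
    by_cases hi : i = iC'
    · rw [show f i = ⟨N, d⟩ from if_pos hi, if_pos hi]
      exact ⟨hd, hrange⟩
    · rw [show f i = ⟨_, c (iD.succAbove i)⟩ from if_neg hi, if_neg hi]
      exact ⟨hF.isCycleMap _, rfl⟩
  refine ⟨fun i => (f i).1, fun i => (f i).2, of_isCycleMap (fun i => (hf i).1) fun v => ?_⟩
  obtain ⟨i₀, hv, hi₀⟩ := hF.existsUnique_mem_range v
  have hmem : ∀ i, v ∈ range (f i).2 ↔ iD.succAbove i = i₀ ∨ (i = iC' ∧ iD = i₀) := by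
    intro i
    have hmem₀ : ∀ i, v ∈ range (c i) ↔ i = i₀ := fun i =>
      ⟨hi₀ i, fun h => h ▸ hv⟩
    rw [(hf i).2]
    split_ifs with hi
    · simp [hmem₀, hi, or_comm]
    · simp [hmem₀, hi]
  by_cases hD : i₀ = iD
  · subst hD
    refine ⟨iC', (hmem iC').2 (Or.inr ⟨rfl, rfl⟩), fun i hi => ?_⟩
    exact (((hmem i).1 hi).resolve_left (Fin.succAbove_ne _ i)).1
  · obtain ⟨i₁, rfl⟩ := Fin.exists_succAbove_eq hD
    refine ⟨i₁, (hmem i₁).2 (Or.inl rfl), fun i hi => ?_⟩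
    rcases (hmem i).1 hi with h | ⟨-, h⟩
    · exact Fin.succAbove_right_injective h
    · exact absurd h.symm hD

lemma exists_merge_crossing (hF : CycleFamily G (m + 1) n c) (hne : iC ≠ iD) {j : ZMod (n iD)}
    (hx : G.Adj (c iC x) (c iD (j + 1))) (hy : G.Adj (c iC (x + 1)) (c iD j)) :
    ∃ (n' : Fin m → ℕ) (c' : ∀ i, ZMod (n' i) → V), CycleFamily G m n' c' := by
  obtain ⟨d, hd, hrange⟩ := (hF.isCycleMap iC).exists_splice (hF.isCycleMap iD)
    (hF.disjoint_range hne) hx hy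
  exact hF.exists_of_replace_pair hne hd hrange

lemma exists_merge_parallel (hF : CycleFamily G (m + 1) n c) (hne : iC ≠ iD) {j : ZMod (n iD)}
    (hx : G.Adj (c iC x) (c iD j)) (hy : G.Adj (c iC (x + 1)) (c iD (j + 1))) :
    ∃ (n' : Fin m → ℕ) (c' : ∀ i, ZMod (n' i) → V), CycleFamily G m n' c' := by
  have hrange_neg : range (c iD ∘ Neg.neg) = range (c iD) := neg_surjective.range_comp _
  have hj : -(-(j + 1) + 1) = j := by ring
  obtain ⟨d, hd, hrange⟩ := (hF.isCycleMap iC).exists_splice (hF.isCycleMap iD).comp_neg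
    (hrange_neg ▸ hF.disjoint_range hne) (j := -(j + 1))
    (by rwa [Function.comp_apply, hj]) (by rwa [Function.comp_apply, neg_neg])
  exact hF.exists_of_replace_pair hne hd (hrange_neg ▸ hrange)

lemma adj_iff_not_adj_add_one (hF : CycleFamily G (m + 1) n c) (h2k2 : TwoK2Free G)
    (hmin : ∀ (k' : ℕ) (n' : Fin k' → ℕ) (c' : ∀ i : Fin k', ZMod (n' i) → V),
      CycleFamily G k' n' c' → m + 1 ≤ k')
    (hiD : iD ≠ iC) (hxB : ¬ AType G c iC (c iC x)) (hyB : ¬ AType G c iC (c iC (x + 1)))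
    (j : ZMod (n iD)) :
    (G.Adj (c iC x) (c iD j) ∨ G.Adj (c iC (x + 1)) (c iD j)) ↔
      ¬ (G.Adj (c iC x) (c iD (j + 1)) ∨ G.Adj (c iC (x + 1)) (c iD (j + 1))) := by
  have hne : ∀ z z', c iC z ≠ c iD z' := fun z z' h => hiD (hF.disj _ _ _ _ h).symm
  have hsome := h2k2.adj_or_adj_of_adj_of_adj (hF.adj iC x) (hF.adj iD j)
    (hne _ _) (hne _ _) (hne _ _) (hne _ _)
  have hfewer :
      ¬ ∃ (n' : Fin m → ℕ) (c' : ∀ i, ZMod (n' i) → V), CycleFamily G m n' c' :=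
    fun ⟨n', c', hF'⟩ => by have := hmin m n' c' hF'; omega
  have hnot_both : ¬ ((G.Adj (c iC x) (c iD j) ∨ G.Adj (c iC (x + 1)) (c iD j)) ∧
      (G.Adj (c iC x) (c iD (j + 1)) ∨ G.Adj (c iC (x + 1)) (c iD (j + 1)))) := by
    rintro ⟨hxu | hyu, hxu' | hyu'⟩
    · exact hxB ⟨iD, hiD, j, hxu, hxu'⟩
    · exact hfewer (hF.exists_merge_parallel hiD.symm hxu hyu')
    · exact hfewer (hF.exists_merge_crossing hiD.symm hxu' hyu)
    · exact hyB ⟨iD, hiD, j, hyu, hyu'⟩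
  tauto

end CycleFamily

theorem btype_edge_alternating (G : SimpleGraph V) (h2k2 : TwoK2Free G)
    (k : ℕ) (n : Fin k → ℕ) (c : ∀ i : Fin k, ZMod (n i) → V)
    (hF : CycleFamily G k n c)
    (hmin : ∀ (k' : ℕ) (n' : Fin k' → ℕ) (c' : ∀ i : Fin k', ZMod (n' i) → V),
      CycleFamily G k' n' c' → k ≤ k')
    (iC : Fin k) (x : ZMod (n iC))
    (hxB : ¬ AType G c iC (c iC x)) (hyB : ¬ AType G c iC (c iC (x + 1))) :
    ∀ iD : Fin k, iD ≠ iC →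
      (∀ j : ZMod (n iD),
        (G.Adj (c iC x) (c iD j) ∨ G.Adj (c iC (x + 1)) (c iD j)) ↔
          ¬ (G.Adj (c iC x) (c iD (j + 1)) ∨ G.Adj (c iC (x + 1)) (c iD (j + 1)))) ∧
      2 * {v | (∃ j, c iD j = v) ∧
            (G.Adj (c iC x) v ∨ G.Adj (c iC (x + 1)) v)}.ncard = n iD := by
  intro iD hiD
  obtain ⟨m, rfl⟩ := Nat.exists_eq_add_one_of_ne_zero iC.pos.ne'
  have halt := hF.adj_iff_not_adj_add_one h2k2 hmin hiD hxB hyB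
  refine ⟨halt, ?_⟩
  have : NeZero (n iD) := ⟨by have := hF.three_le iD; omega⟩
  change 2 * (range (c iD) ∩ {v | G.Adj (c iC x) v ∨ G.Adj (c iC (x + 1)) v}).ncard = n iD
  rw [← image_preimage_eq_range_inter, ncard_image_of_injective _ (hF.inj iD)]
  exact (two_mul_ncard_eq_of_mem_iff_add_notMem 1 halt).trans (Nat.card_zmod _)
end

section
/- Let G be a graph with a 2-factor whose cycle family F has at least two cycles, and suppose every edge of every cycle of F has exactly one A-type endpoint (i.e., every cycle is AB-alternating). Then the toughness of G is at most 1. -/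
/-!
Take `S` to be the set of A-type vertices. Every B-vertex is the successor of an A-vertex, so
`G - S` is the independent set `B ⊆ A⁺` and has `|B|` components. The successor map embeds `A`
into `B`, and each of the at least two cycles contains a B-vertex, so `2 ≤ |B|` and
`t · |B| ≤ |A| ≤ |B|` forces `t ≤ 1`.
-/

open SimpleGraph

variable {V : Type*}

theorem compCount_eq_ncard_compl_of_indepSet [Fintype V] {G : SimpleGraph V} {S : Set V}
    (hS : IndepSet G Sᶜ) : compCount G S = Sᶜ.ncard := by
  have hbot : G.induce Sᶜ = ⊥ := by
    ext a b
    exact iff_of_false (fun h : G.Adj a b => hS a.2 b.2 h.ne h) id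
  rw [compCount, hbot, ← Nat.card_coe_set_eq]
  refine (Nat.card_eq_of_bijective (⊥ : SimpleGraph (Sᶜ : Set V)).connectedComponentMk
    ⟨fun a b hab => reachable_bot.mp (ConnectedComponent.eq.mp hab), ?_⟩).symm
  exact fun C => C.exists_rep.imp fun _ => id

theorem Tough.le_one_of_ncard_le_compCount [Fintype V] {t : ℝ} {G : SimpleGraph V}
    (ht : Tough t G) {S : Set V} (h2 : 2 ≤ compCount G S) (hS : S.ncard ≤ compCount G S) :
    t ≤ 1 := by
  have hpos : (0 : ℝ) < compCount G S := by exact_mod_cast (by omega : 0 < compCount G S)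
  refine le_of_mul_le_mul_right ?_ hpos
  calc t * compCount G S ≤ S.ncard := ht S h2
    _ ≤ 1 * compCount G S := by rw [one_mul]; exact_mod_cast hS

def aTypeSet {k : ℕ} {n : Fin k → ℕ} (G : SimpleGraph V) (c : ∀ i : Fin k, ZMod (n i) → V) :
    Set V :=
  {v | ∃ i j, c i j = v ∧ AType G c i v}

def IsABAlternating {k : ℕ} {n : Fin k → ℕ} (c : ∀ i : Fin k, ZMod (n i) → V) (A : Set V) :
    Prop :=
  ∀ i j, c i j ∈ A ↔ c i (j + 1) ∉ A

namespace IsABAlternating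

variable {k : ℕ} {n : Fin k → ℕ} {c : ∀ i : Fin k, ZMod (n i) → V} {A : Set V}

theorem exists_notMem (hA : IsABAlternating c A) (i : Fin k) : ∃ j, c i j ∉ A := by
  by_cases h : c i 0 ∈ A
  · exact ⟨1, by simpa using (hA i 0).mp h⟩
  · exact ⟨0, h⟩

theorem compl_subset_succ (hA : IsABAlternating c A) (hspan : ∀ v, ∃ i j, c i j = v) :
    Aᶜ ⊆ {v | ∃ i j, c i j ∈ A ∧ v = c i (j + 1)} := by
  intro v hv
  obtain ⟨i, j, rfl⟩ := hspan v
  refine ⟨i, j - 1, (hA i (j - 1)).mpr ?_, by rw [sub_add_cancel]⟩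
  rwa [sub_add_cancel]

end IsABAlternating

namespace CycleFamily

variable {G : SimpleGraph V} {k : ℕ} {n : Fin k → ℕ} {c : ∀ i : Fin k, ZMod (n i) → V}

theorem injective_sigma (hF : CycleFamily G k n c) :
    Function.Injective fun p : Σ i, ZMod (n i) => c p.1 p.2 := by
  rintro ⟨i, j⟩ ⟨i', j'⟩ h
  obtain rfl := hF.disj i i' j j' h
  obtain rfl := hF.inj i h
  rfl

theorem surjective_sigma (hF : CycleFamily G k n c) :
    Function.Surjective fun p : Σ i, ZMod (n i) => c p.1 p.2 :=
  fun v => (hF.spanning v).elim fun i ⟨j, h⟩ => ⟨⟨i, j⟩, h⟩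

theorem injective_sigma_succ (hF : CycleFamily G k n c) :
    Function.Injective fun p : Σ i, ZMod (n i) => c p.1 (p.2 + 1) := by
  rintro ⟨i, j⟩ ⟨i', j'⟩ h
  obtain rfl := hF.disj i i' _ _ h
  obtain rfl := add_right_cancel (hF.inj i h)
  rfl

theorem mem_aTypeSet_iff (hF : CycleFamily G k n c) {i : Fin k} {j : ZMod (n i)} :
    c i j ∈ aTypeSet G c ↔ AType G c i (c i j) := by
  constructor
  · rintro ⟨i', j', hc, hA⟩
    obtain rfl := hF.disj i' i j' j hc
    exact hA
  · exact fun hA => ⟨i, j, rfl, hA⟩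

theorem ncard_le_ncard_compl [Finite V] {A : Set V} (hF : CycleFamily G k n c)
    (hA : IsABAlternating c A) : A.ncard ≤ Aᶜ.ncard := by
  set T := (fun p : Σ i, ZMod (n i) => c p.1 p.2) ⁻¹' A
  have hsucc : (fun p : Σ i, ZMod (n i) => c p.1 (p.2 + 1)) '' T ⊆ Aᶜ := by
    rintro _ ⟨⟨i, j⟩, hp, rfl⟩
    exact (hA i j).mp hp
  calc A.ncard = T.ncard := by
        rw [← Set.image_preimage_eq A hF.surjective_sigma,
          Set.ncard_image_of_injective _ hF.injective_sigma]
    _ = ((fun p : Σ i, ZMod (n i) => c p.1 (p.2 + 1)) '' T).ncard :=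
        (Set.ncard_image_of_injective _ hF.injective_sigma_succ).symm
    _ ≤ Aᶜ.ncard := Set.ncard_le_ncard hsucc

theorem two_le_ncard_compl [Finite V] {A : Set V} (hF : CycleFamily G k n c)
    (hA : IsABAlternating c A) (hk : 2 ≤ k) : 2 ≤ Aᶜ.ncard := by
  obtain ⟨j₀, hj₀⟩ := hA.exists_notMem ⟨0, by omega⟩
  obtain ⟨j₁, hj₁⟩ := hA.exists_notMem ⟨1, by omega⟩
  have hne : c ⟨0, by omega⟩ j₀ ≠ c ⟨1, by omega⟩ j₁ := fun h => by
    simpa [Fin.ext_iff] using hF.disj _ _ _ _ h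
  rw [← Set.ncard_pair hne]
  exact Set.ncard_le_ncard (Set.pair_subset hj₀ hj₁)

end CycleFamily

theorem ab_alternating_tough_le_one [Fintype V] (G : SimpleGraph V)
    (k : ℕ) (n : Fin k → ℕ) (c : ∀ i : Fin k, ZMod (n i) → V)
    (hF : CycleFamily G k n c)
    (hk : 2 ≤ k)
    (halt : ∀ (i : Fin k) (j : ZMod (n i)), AType G c i (c i j) ↔ ¬ AType G c i (c i (j + 1)))
    (hAplus : IndepSet G
      {v | ∃ (i : Fin k) (j : ZMod (n i)), AType G c i (c i j) ∧ v = c i (j + 1)}) :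
    ∀ t : ℝ, Tough t G → t ≤ 1 := by
  intro t ht
  have hA : IsABAlternating c (aTypeSet G c) := by
    simpa only [IsABAlternating, hF.mem_aTypeSet_iff] using halt
  have hB : IndepSet G (aTypeSet G c)ᶜ := by
    refine Set.Pairwise.mono ?_ hAplus
    simpa only [hF.mem_aTypeSet_iff] using hA.compl_subset_succ hF.spanning
  have hcomp := compCount_eq_ncard_compl_of_indepSet hB
  refine ht.le_one_of_ncard_le_compCount (S := aTypeSet G c) ?_ ?_
  · exact hcomp ▸ hF.two_le_ncard_compl hA hk
  · exact hcomp ▸ hF.ncard_le_ncard_compl hA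
end

section
/- Let G be a 2K2-free graph with a 2-factor whose cycle family F has at least two cycles C and D (with |V(C)| ≤ |V(D)|), and suppose C contains a B-type edge xy with the property that the set I of vertices outside C adjacent to neither x nor y is an independent set of size |V(G)−V(C)|/2. Then the toughness of G is strictly less than 3. -/
open SimpleGraph

variable {V : Type*}

/-!
Deleting `S = V(G) - (I ∪ {x})` leaves the independent set `I ∪ {x}`, hence `|I| + 1` singleton
components, while `|S| = |V(G)| - |I| - 1 = |V(C)| + |I| - 1`. So `3`-toughness would force
`2|I| + 4 ≤ |V(C)|`. But the vertices outside `C` include those of `D`, so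
`2|I| = |V(G)| - |V(C)| ≥ |V(D)| ≥ |V(C)|`.
-/

section Toughness

variable {G : SimpleGraph V}

lemma IndepSet.induce_eq_bot {s : Set V} (hs : IndepSet G s) : G.induce s = ⊥ := by
  ext a b
  simpa using fun hab => hs a.2 b.2 (G.ne_of_adj hab) hab

lemma IndepSet.insert {s : Set V} {a : V} (hs : IndepSet G s) (ha : ∀ v ∈ s, ¬ G.Adj a v) :
    IndepSet G (insert a s) :=
  Set.Pairwise.insert hs fun v hv _ => ⟨ha v hv, fun hva => ha v hv hva.symm⟩

lemma compCount_eq_ncard_compl [Fintype V] {S : Set V} (hS : IndepSet G Sᶜ) :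
    compCount G S = Sᶜ.ncard := by
  rw [compCount, hS.induce_eq_bot, ← Nat.card_coe_set_eq]
  exact (Nat.card_eq_of_bijective (⊥ : SimpleGraph (Sᶜ : Set V)).connectedComponentMk
    ⟨fun a b hab => reachable_bot.mp (ConnectedComponent.exact hab), Quot.exists_rep⟩).symm

lemma Tough.mul_ncard_le_ncard_compl [Fintype V] {t : ℝ} (hG : Tough t G) {s : Set V}
    (hs : IndepSet G s) (h2 : 2 ≤ s.ncard) : t * s.ncard ≤ sᶜ.ncard := by
  have hcomp : compCount G sᶜ = s.ncard := by
    rw [compCount_eq_ncard_compl (by rwa [compl_compl]), compl_compl]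
  simpa only [hcomp] using hG sᶜ (hcomp ▸ h2)

end Toughness

namespace CycleFamily

variable {G : SimpleGraph V} {k : ℕ} {n : Fin k → ℕ} {c : ∀ i : Fin k, ZMod (n i) → V}

lemma ncard_range (hF : CycleFamily G k n c) (i : Fin k) : (Set.range (c i)).ncard = n i := by
  have : NeZero (n i) := ⟨by have := hF.three_le i; omega⟩
  rw [← Nat.card_coe_set_eq, Nat.card_range_of_injective (hF.inj i), Nat.card_zmod]

lemma add_le_card [Fintype V] (hF : CycleFamily G k n c) {i i' : Fin k} (hii' : i ≠ i') :
    n i + n i' ≤ Fintype.card V := by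
  have hdisj : Disjoint (Set.range (c i)) (Set.range (c i')) := by
    rw [Set.disjoint_left]
    rintro v ⟨j, rfl⟩ ⟨j', hj'⟩
    exact hii' (hF.disj i i' j j' hj'.symm)
  rw [← hF.ncard_range i, ← hF.ncard_range i', ← Set.ncard_union_eq hdisj,
    ← Nat.card_eq_fintype_card, ← Set.ncard_univ]
  exact Set.ncard_le_ncard (Set.subset_univ _)

end CycleFamily

theorem two_btype_cycles_tough_lt_three_general [Fintype V] (G : SimpleGraph V)
    (k : ℕ) (n : Fin k → ℕ) (c : ∀ i : Fin k, ZMod (n i) → V)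
    (hF : CycleFamily G k n c)
    (iC iD : Fin k) (hne : iC ≠ iD) (hle : n iC ≤ n iD) (x : ZMod (n iC))
    (hI : IndepSet G
      {v | (∀ j, c iC j ≠ v) ∧ ¬ G.Adj (c iC x) v ∧ ¬ G.Adj (c iC (x + 1)) v})
    (hsize : 2 * {v | (∀ j, c iC j ≠ v) ∧ ¬ G.Adj (c iC x) v ∧
        ¬ G.Adj (c iC (x + 1)) v}.ncard = Fintype.card V - n iC) :
    ¬ Tough 3 G := by
  set I := {v | (∀ j, c iC j ≠ v) ∧ ¬ G.Adj (c iC x) v ∧ ¬ G.Adj (c iC (x + 1)) v}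
  have hCD := hF.add_le_card hne
  have hC3 := hF.three_le iC
  have hcard : (insert (c iC x) I).ncard = I.ncard + 1 :=
    Set.ncard_insert_of_notMem fun h => h.1 x rfl
  intro hT
  have hbound := hT.mul_ncard_le_ncard_compl (hI.insert fun v hv => hv.2.1) (by omega)
  have hsplit := Set.ncard_add_ncard_compl (insert (c iC x) I)
  rw [hcard] at hbound hsplit
  rw [Nat.card_eq_fintype_card] at hsplit
  have : 3 * (I.ncard + 1) ≤ (insert (c iC x) I)ᶜ.ncard := by exact_mod_cast hbound
  omega

theorem two_btype_cycles_tough_lt_three [Fintype V] (G : SimpleGraph V)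
    (h2k2 : TwoK2Free G)
    (k : ℕ) (n : Fin k → ℕ) (c : ∀ i : Fin k, ZMod (n i) → V)
    (hF : CycleFamily G k n c)
    (hk : 2 ≤ k) (iC iD : Fin k) (hne : iC ≠ iD) (hle : n iC ≤ n iD) (x : ZMod (n iC))
    (hxB : ¬ AType G c iC (c iC x)) (hyB : ¬ AType G c iC (c iC (x + 1)))
    (hI : IndepSet G
      {v | (∀ j, c iC j ≠ v) ∧ ¬ G.Adj (c iC x) v ∧ ¬ G.Adj (c iC (x + 1)) v})
    (hsize : 2 * {v | (∀ j, c iC j ≠ v) ∧ ¬ G.Adj (c iC x) v ∧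
        ¬ G.Adj (c iC (x + 1)) v}.ncard = Fintype.card V - n iC) :
    ¬ Tough 3 G :=
  two_btype_cycles_tough_lt_three_general G k n c hF iC iD hne hle x hI hsize
end

section
/- Let G be a graph, C a cycle in G, v a vertex of C, and P a Hamiltonian path of C from v to x (a path in G using exactly the vertices of C with endpoints v and x). Let D be a cycle vertex-disjoint from C with an edge u u⁺ such that x is adjacent to u and v is adjacent to u⁺. Then G contains a cycle with vertex set exactly V(C) ∪ V(D). -/
open SimpleGraph

variable {V : Type*}

/-!
The cycle runs along `P` from `v` to `x`, jumps to `u`, goes around `D` backwards from `u` to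
`u⁺` and jumps back to `v`. Walks are `Fin`-indexed sequences; one whose ends are adjacent
closes up into a `ZMod`-indexed cycle.
-/

theorem Fin.range_append {α : Type*} {m n : ℕ} (u : Fin m → α) (w : Fin n → α) :
    Set.range (Fin.append u w) = Set.range u ∪ Set.range w := by
  rw [← Set.Sum.elim_range, ← Fin.append_comp_sumElim,
    ← finSumFinEquiv.surjective.range_comp (Fin.append u w)]
  rfl

theorem ZMod.finEquiv_last (n : ℕ) : ZMod.finEquiv (n + 1) (Fin.last n) = -1 :=
  eq_neg_of_add_eq_zero_left <| by
    rw [← map_one (ZMod.finEquiv (n + 1)), ← map_add, Fin.last_add_one, map_zero]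

def IsAdjChain (G : SimpleGraph V) {n : ℕ} (w : Fin n → V) : Prop :=
  ∀ i k : Fin n, (k : ℕ) = i + 1 → G.Adj (w i) (w k)

namespace IsAdjChain

variable {G : SimpleGraph V}

theorem of_adj_add_one {n : ℕ} {w : Fin (n + 1) → V} (hw : ∀ i, G.Adj (w i) (w (i + 1))) :
    IsAdjChain G w := by
  intro i k hik
  have hi : i ≠ Fin.last n := by rintro rfl; have := k.isLt; rw [Fin.val_last] at hik; omega
  obtain rfl : k = i + 1 :=
    Fin.ext (by rw [hik, Fin.val_add_one_of_lt (Fin.lt_last_iff_ne_last.2 hi)])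
  exact hw i

theorem adj_add_one {n : ℕ} {w : Fin (n + 1) → V} (hw : IsAdjChain G w)
    (hclose : G.Adj (w (Fin.last n)) (w 0)) (i : Fin (n + 1)) : G.Adj (w i) (w (i + 1)) := by
  rcases (Fin.le_last i).eq_or_lt with rfl | hi
  · simpa using hclose
  · exact hw _ _ (Fin.val_add_one_of_lt hi)

theorem comp_finEquiv_subLeft {n : ℕ} {c : ZMod (n + 1) → V}
    (hc : ∀ z, G.Adj (c z) (c (z + 1))) (j : ZMod (n + 1)) :
    IsAdjChain G (c ∘ (ZMod.finEquiv (n + 1)).toEquiv.trans (Equiv.subLeft j)) :=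
  of_adj_add_one fun k => by
    simpa [map_add, sub_add_eq_sub_sub] using (hc (j - ZMod.finEquiv (n + 1) k - 1)).symm

theorem append {a b : ℕ} {u : Fin (a + 1) → V} {w : Fin (b + 1) → V}
    (hu : IsAdjChain G u) (hw : IsAdjChain G w) (huw : G.Adj (u (Fin.last a)) (w 0)) :
    IsAdjChain G (Fin.append u w) := by
  intro i k hik
  induction i using Fin.addCases with
  | left i =>
    induction k using Fin.addCases with
    | left k => simpa using hu i k (by simpa using hik)
    | right k =>
      simp only [Fin.val_natAdd, Fin.val_castAdd] at hik
      have := i.isLt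
      obtain rfl : i = Fin.last a := Fin.ext (by rw [Fin.val_last]; omega)
      obtain rfl : k = 0 := Fin.ext (by rw [Fin.val_zero]; omega)
      simpa using huw
  | right i =>
    induction k using Fin.addCases with
    | left k => simp only [Fin.val_castAdd, Fin.val_natAdd] at hik; omega
    | right k => simpa using hw i k (by simp only [Fin.val_natAdd] at hik; omega)

theorem exists_cycle {n : ℕ} {w : Fin (n + 1) → V} (hw : IsAdjChain G w)
    (hinj : Function.Injective w) (hclose : G.Adj (w (Fin.last n)) (w 0)) :
    ∃ e : ZMod (n + 1) → V, Function.Injective e ∧ (∀ l, G.Adj (e l) (e (l + 1))) ∧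
      Set.range e = Set.range w := by
  set f := (ZMod.finEquiv (n + 1)).symm
  refine ⟨w ∘ f, hinj.comp f.injective, fun l => ?_, f.surjective.range_comp w⟩
  simpa only [Function.comp_apply, map_add, map_one] using hw.adj_add_one hclose (f l)

theorem exists_cycle_append {a b : ℕ} {u : Fin (a + 1) → V} {w : Fin (b + 1) → V}
    (hu : IsAdjChain G u) (hw : IsAdjChain G w)
    (hu_inj : Function.Injective u) (hw_inj : Function.Injective w)
    (hdisj : Disjoint (Set.range u) (Set.range w))
    (huw : G.Adj (u (Fin.last a)) (w 0)) (hwu : G.Adj (w (Fin.last b)) (u 0)) :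
    ∃ e : ZMod (a + 1 + (b + 1)) → V, Function.Injective e ∧ (∀ l, G.Adj (e l) (e (l + 1))) ∧
      Set.range e = Set.range u ∪ Set.range w := by
  have hinj : Function.Injective (Fin.append u w) :=
    Fin.append_injective_iff.2 ⟨hu_inj, hw_inj, fun i k h =>
      Set.disjoint_left.1 hdisj ⟨i, rfl⟩ ⟨k, h.symm⟩⟩
  have hclose : G.Adj (Fin.append u w (Fin.last (a + 1 + b))) (Fin.append u w 0) := by
    rwa [← Fin.natAdd_last, Fin.append_right, show (0 : Fin _) = Fin.castAdd (b + 1) 0 from rfl,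
      Fin.append_left]
  rw [← Fin.range_append]
  exact (hu.append hw huw).exists_cycle hinj hclose

end IsAdjChain

theorem path_plus_cycle_merge (G : SimpleGraph V) (m q : ℕ) (hm : 3 ≤ m) (hq : 3 ≤ q)
    (cC : ZMod m → V) (cD : ZMod q → V)
    (hDinj : Function.Injective cD)
    (hDadj : ∀ j, G.Adj (cD j) (cD (j + 1)))
    (hdisj : Disjoint (Set.range cC) (Set.range cD))
    (P : Fin m → V) (hPinj : Function.Injective P)
    (hPrange : Set.range P = Set.range cC)
    (hPadj : ∀ i : ℕ, ∀ h : i + 1 < m, G.Adj (P ⟨i, by omega⟩) (P ⟨i + 1, h⟩))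
    (v x : V) (hv : P ⟨0, by omega⟩ = v) (hx : P ⟨m - 1, by omega⟩ = x)
    (j : ZMod q) (hxu : G.Adj x (cD j)) (hvu : G.Adj v (cD (j + 1))) :
    ∃ (r : ℕ) (e : ZMod r → V), 3 ≤ r ∧ Function.Injective e ∧
      (∀ l, G.Adj (e l) (e (l + 1))) ∧ Set.range e = Set.range cC ∪ Set.range cD := by
  obtain ⟨m, rfl⟩ : ∃ m', m = m' + 1 := ⟨m - 1, by omega⟩
  obtain ⟨q, rfl⟩ : ∃ q', q = q' + 1 := ⟨q - 1, by omega⟩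
  have hPchain : IsAdjChain G P := by
    rintro ⟨i, hi⟩ ⟨k, hk⟩ (rfl : k = i + 1)
    exact hPadj i hk
  have hPlast : P (Fin.last m) = x := hx
  have hPzero : P 0 = v := hv
  set σ := (ZMod.finEquiv (q + 1)).toEquiv.trans (Equiv.subLeft j)
  obtain ⟨e, he_inj, he_adj, he_range⟩ := hPchain.exists_cycle_append
    (IsAdjChain.comp_finEquiv_subLeft hDadj j) hPinj (hDinj.comp σ.injective)
    (by rwa [hPrange, σ.surjective.range_comp]) (by simpa [σ, hPlast] using hxu)
    (by simpa [σ, ZMod.finEquiv_last, hPzero] using hvu.symm)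
  refine ⟨m + 1 + (q + 1), e, by omega, he_inj, he_adj, ?_⟩
  rw [he_range, hPrange, σ.surjective.range_comp]
end
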